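/- arXiv:2504.03751 — 2 statements merged into one kernel-verified Lean document; each statement's English description precedes it below -/
import Mathlib

section
/- Tail bound: for each q, λ > 0 there exist C > 0 and all n ∈ ℕ with n ≥ 2 and 0 < β < 1, the sum of M_{q,λ}(nx − k) over integers k with |k/n − x| ≥ n^{−β} is at most C e^{−λ(n^{1−β} − 1)}. -/
noncomputable def g (q lam : ℝ) (x : ℝ) : ℝ :=
  (Real.exp (lam * x) - q * Real.exp (-lam * x)) /
    (Real.exp (lam * x) + q * Real.exp (-lam * x))

noncomputable def M (q lam : ℝ) (x : ℝ) : ℝ :=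
  (g q lam (x + 1) - g q lam (x - 1)) / 4

lemma g_eq (q lam : ℝ) (hq : 0 < q) (x : ℝ) :
    g q lam x = 1 - 2 * q / (Real.exp (2 * lam * x) + q) := by
  have ht : (0:ℝ) < Real.exp (lam * x) := Real.exp_pos _
  have h2 : Real.exp (2 * lam * x) = Real.exp (lam * x) * Real.exp (lam * x) := by
    rw [← Real.exp_add]; ring_nf
  have hneg : Real.exp (-lam * x) = (Real.exp (lam * x))⁻¹ := by
    rw [← Real.exp_neg]; ring_nf
  unfold g
  rw [hneg, h2]
  have hd1 : (0:ℝ) < Real.exp (lam * x) + q * (Real.exp (lam * x))⁻¹ := by positivity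
  have hd2 : (0:ℝ) < Real.exp (lam * x) * Real.exp (lam * x) + q := by positivity
  field_simp
  ring

lemma M_nonneg (q lam : ℝ) (hq : 0 < q) (hlam : 0 < lam) (x : ℝ) :
    0 ≤ M q lam x := by
  unfold M
  rw [g_eq q lam hq, g_eq q lam hq]
  have h1 : Real.exp (2 * lam * (x - 1)) ≤ Real.exp (2 * lam * (x + 1)) := by
    apply Real.exp_le_exp.2; nlinarith
  have h2 : (0:ℝ) < Real.exp (2 * lam * (x - 1)) + q := by positivity
  have h3 : 2 * q / (Real.exp (2 * lam * (x + 1)) + q)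
      ≤ 2 * q / (Real.exp (2 * lam * (x - 1)) + q) := by
    gcongr
  linarith

lemma M_le_exp (q lam : ℝ) (hq : 0 < q) (hlam : 0 < lam) (x : ℝ) :
    M q lam x ≤ (q + q⁻¹) / 2 * Real.exp (-(2 * lam) * (|x| - 1)) := by
  unfold M
  rw [g_eq q lam hq, g_eq q lam hq]
  rcases le_or_gt 0 x with hx | hx
  · rw [abs_of_nonneg hx]
    have hE : (0:ℝ) < Real.exp (2 * lam * (x - 1)) := Real.exp_pos _
    have hEq : (0:ℝ) < Real.exp (2 * lam * (x - 1)) + q := by positivity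
    have hEp : (0:ℝ) < Real.exp (2 * lam * (x + 1)) + q := by positivity
    have h1 : 2 * q / (Real.exp (2 * lam * (x - 1)) + q)
        ≤ 2 * q / Real.exp (2 * lam * (x - 1)) := by gcongr; linarith
    have h2 : 0 ≤ 2 * q / (Real.exp (2 * lam * (x + 1)) + q) := by positivity
    have h3 : 2 * q / Real.exp (2 * lam * (x - 1))
        = 2 * q * Real.exp (-(2 * lam) * (x - 1)) := by
      rw [div_eq_mul_inv, ← Real.exp_neg]; ring_nf
    have hq2 : 0 ≤ q⁻¹ := by positivity
    have he : (0:ℝ) < Real.exp (-(2 * lam) * (x - 1)) := Real.exp_pos _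
    nlinarith [he.le]
  · rw [abs_of_neg hx]
    have key : -(2 * lam) * (-x - 1) = 2 * lam * (x + 1) := by ring
    rw [key]
    have hE : (0:ℝ) < Real.exp (2 * lam * (x + 1)) := Real.exp_pos _
    have hEp : (0:ℝ) < Real.exp (2 * lam * (x + 1)) + q := by positivity
    have hEm : (0:ℝ) < Real.exp (2 * lam * (x - 1)) + q := by positivity
    -- M ≤ (2 - 2q/(E+q))/4 = E/(2(E+q)) ≤ E/(2q)
    have h1 : 2 * q / (Real.exp (2 * lam * (x - 1)) + q) ≤ 2 := by
      rw [div_le_iff₀ hEm]; nlinarith [Real.exp_pos (2 * lam * (x - 1))]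
    have h2 : (2 - 2 * q / (Real.exp (2 * lam * (x + 1)) + q)) / 4
        ≤ q⁻¹ / 2 * Real.exp (2 * lam * (x + 1)) := by
      rw [div_le_iff₀ (by norm_num : (0:ℝ) < 4)]
      have : 2 - 2 * q / (Real.exp (2 * lam * (x + 1)) + q)
          = 2 * Real.exp (2 * lam * (x + 1)) / (Real.exp (2 * lam * (x + 1)) + q) := by
        field_simp
        ring
      rw [this]
      rw [div_le_iff₀ hEp]
      have hqi : q⁻¹ * q = 1 := inv_mul_cancel₀ hq.ne'
      nlinarith [mul_pos hE hE, mul_pos (mul_pos hE hE) hq, inv_pos.2 hq]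
    have h3 : q⁻¹ / 2 * Real.exp (2 * lam * (x + 1))
        ≤ (q + q⁻¹) / 2 * Real.exp (2 * lam * (x + 1)) := by
      gcongr; linarith
    linarith

lemma sum_exp_abs (lam : ℝ) (hlam : 0 < lam) :
    Summable (fun k : ℤ ↦ Real.exp (-lam * |(k : ℝ)|)) ∧
      ∑' k : ℤ, Real.exp (-lam * |(k : ℝ)|) ≤ 2 / (1 - Real.exp (-lam)) := by
  set r := Real.exp (-lam) with hr
  have hr0 : (0:ℝ) < r := Real.exp_pos _
  have hr1 : r < 1 := Real.exp_lt_one_iff.2 (by linarith)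
  set f : ℤ → ℝ := fun k ↦ Real.exp (-lam * |(k : ℝ)|) with hf
  have hnat : (fun n : ℕ ↦ f n) = fun n : ℕ ↦ r ^ n := by
    funext n
    simp only [hf, hr]
    rw [← Real.exp_nat_mul]
    congr 1
    push_cast
    rw [abs_of_nonneg (by positivity : (0:ℝ) ≤ (n:ℝ))]
    ring
  have hneg : (fun n : ℕ ↦ f (-((n : ℤ) + 1))) = fun n : ℕ ↦ r * r ^ n := by
    funext n
    simp only [hf, hr]
    rw [← Real.exp_nat_mul, ← Real.exp_add]
    congr 1
    have h1 : ((-((n : ℤ) + 1) : ℤ) : ℝ) = -((n : ℝ) + 1) := by push_cast; ring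
    rw [h1, abs_of_nonpos (by push_cast; linarith [Nat.cast_nonneg (α := ℝ) n])]
    ring
  have s1 : Summable fun n : ℕ ↦ r ^ n := summable_geometric_of_lt_one hr0.le hr1
  have s2 : Summable fun n : ℕ ↦ r * r ^ n := s1.mul_left r
  have hS : Summable f := by
    apply Summable.of_nat_of_neg_add_one
    · rw [hnat]; exact s1
    · rw [hneg]; exact s2
  refine ⟨hS, ?_⟩
  have ht : ∑' k : ℤ, f k
      = (∑' n : ℕ, f n) + ∑' n : ℕ, f (-((n : ℤ) + 1)) := by
    apply tsum_of_nat_of_neg_add_one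
    · rw [hnat]; exact s1
    · rw [hneg]; exact s2
  rw [show (∑' k : ℤ, Real.exp (-lam * |(k : ℝ)|)) = ∑' k : ℤ, f k from rfl, ht, hnat, hneg]
  rw [tsum_geometric_of_lt_one hr0.le hr1, tsum_mul_left,
    tsum_geometric_of_lt_one hr0.le hr1]
  have h1r : (0:ℝ) < 1 - r := by linarith
  rw [div_eq_mul_inv]
  have heq : (1 - r)⁻¹ + r * (1 - r)⁻¹ = (1 + r) * (1 - r)⁻¹ := by ring
  rw [heq]
  apply mul_le_mul_of_nonneg_right (by linarith) (by positivity)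

lemma sum_exp_shift (lam : ℝ) (hlam : 0 < lam) (y : ℝ) :
    Summable (fun k : ℤ ↦ Real.exp (-lam * |y - k|)) ∧
      ∑' k : ℤ, Real.exp (-lam * |y - k|) ≤ 2 * Real.exp lam / (1 - Real.exp (-lam)) := by
  obtain ⟨hS0, hT0⟩ := sum_exp_abs lam hlam
  set m : ℤ := round y with hm
  have hmy : |y - m| ≤ 1 := by
    have := abs_sub_round y
    rw [← hm] at this
    linarith
  -- the majorant
  set G : ℤ → ℝ := fun k ↦ Real.exp lam * Real.exp (-lam * |((m - k : ℤ) : ℝ)|) with hG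
  have hptle : ∀ k : ℤ, Real.exp (-lam * |y - k|) ≤ G k := by
    intro k
    simp only [hG]
    rw [← Real.exp_add]
    apply Real.exp_le_exp.2
    have habs : |((m - k : ℤ) : ℝ)| - 1 ≤ |y - k| := by
      push_cast
      have h1 : |(m:ℝ) - k| ≤ |(m:ℝ) - y| + |y - k| := abs_sub_le _ _ _
      have h2 : |(m:ℝ) - y| ≤ 1 := by rw [abs_sub_comm]; exact hmy
      linarith
    nlinarith
  have hGsum : Summable G := by
    apply Summable.mul_left
    exact ((Equiv.subLeft m).summable_iff
      (f := fun k : ℤ ↦ Real.exp (-lam * |(k : ℝ)|))).2 hS0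
  have hsum : Summable (fun k : ℤ ↦ Real.exp (-lam * |y - k|)) :=
    Summable.of_nonneg_of_le (fun k ↦ (Real.exp_pos _).le) hptle hGsum
  refine ⟨hsum, ?_⟩
  calc ∑' k : ℤ, Real.exp (-lam * |y - k|) ≤ ∑' k : ℤ, G k :=
        Summable.tsum_le_tsum hptle hsum hGsum
    _ = Real.exp lam * ∑' k : ℤ, Real.exp (-lam * |((m - k : ℤ) : ℝ)|) := tsum_mul_left
    _ = Real.exp lam * ∑' k : ℤ, Real.exp (-lam * |(k : ℝ)|) := by
        congr 1
        exact (Equiv.subLeft m).tsum_eq (fun k : ℤ ↦ Real.exp (-lam * |(k : ℝ)|))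
    _ ≤ Real.exp lam * (2 / (1 - Real.exp (-lam))) := by
        apply mul_le_mul_of_nonneg_left hT0 (Real.exp_pos _).le
    _ = 2 * Real.exp lam / (1 - Real.exp (-lam)) := by ring

theorem M_tail_bound (q lam : ℝ) (hq : 0 < q) (hlam : 0 < lam) :
    ∃ C > 0, ∀ (n : ℕ), 2 ≤ n → ∀ β : ℝ, 0 < β → β < 1 → ∀ x : ℝ,
      ∑' k : {k : ℤ // (n : ℝ) ^ (-β) ≤ |(k : ℝ) / n - x|},
          M q lam (n * x - (k : ℤ)) ≤
        C * Real.exp (-lam * ((n : ℝ) ^ (1 - β) - 1)) := by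
  set K : ℝ := (q + q⁻¹) / 2 with hK
  have hKpos : 0 < K := by positivity
  have hden : 0 < 1 - Real.exp (-lam) := by
    have : Real.exp (-lam) < 1 := Real.exp_lt_one_iff.2 (by linarith)
    linarith
  set S : ℝ := 2 * Real.exp lam / (1 - Real.exp (-lam)) with hSdef
  have hSpos : 0 < S := by positivity
  refine ⟨K * Real.exp lam * S, by positivity, ?_⟩
  intro n hn β hβ0 hβ1 x
  have hn0 : (0:ℝ) < n := by positivity
  set T : ℝ := (n : ℝ) ^ (1 - β) with hT
  have hT0 : 0 < T := Real.rpow_pos_of_pos hn0 _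
  -- each k in the tail set satisfies T ≤ |n x - k|
  have hdist : ∀ k : ℤ, (n : ℝ) ^ (-β) ≤ |(k : ℝ) / n - x| → T ≤ |(n:ℝ) * x - k| := by
    intro k hk
    have h1 : |(n:ℝ) * x - k| = n * |(k : ℝ) / n - x| := by
      rw [← abs_of_pos hn0, ← abs_mul]
      rw [abs_sub_comm]
      congr 1
      field_simp
      rw [abs_of_pos hn0]; ring
    rw [h1, hT]
    have h2 : (n:ℝ) ^ (1 - β) = n * (n:ℝ) ^ (-β) := by
      rw [show (1 : ℝ) - β = 1 + (-β) by ring, Real.rpow_add hn0, Real.rpow_one]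
    rw [h2]
    exact mul_le_mul_of_nonneg_left hk hn0.le
  -- majorant over all of ℤ
  set B : ℤ → ℝ := fun k ↦ K * Real.exp (2 * lam) * Real.exp (-lam * T)
      * Real.exp (-lam * |(n:ℝ) * x - k|) with hB
  obtain ⟨hsumE, htsumE⟩ := sum_exp_shift lam hlam ((n:ℝ) * x)
  have hBsum : Summable B := by
    apply Summable.mul_left
    exact hsumE
  -- pointwise bound on the subtype
  have hpt : ∀ k : {k : ℤ // (n : ℝ) ^ (-β) ≤ |(k : ℝ) / n - x|},
      M q lam ((n:ℝ) * x - (k : ℤ)) ≤ B (k : ℤ) := by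
    rintro ⟨k, hk⟩
    have hTk := hdist k hk
    have h1 := M_le_exp q lam hq hlam ((n:ℝ) * x - k)
    have h2 : Real.exp (-(2 * lam) * (|(n:ℝ) * x - k| - 1))
        = Real.exp (2 * lam) * Real.exp (-lam * |(n:ℝ) * x - k|)
          * Real.exp (-lam * |(n:ℝ) * x - k|) := by
      rw [← Real.exp_add, ← Real.exp_add]
      congr 1
      ring
    have h3 : Real.exp (-lam * |(n:ℝ) * x - k|) ≤ Real.exp (-lam * T) := by
      apply Real.exp_le_exp.2
      nlinarith
    simp only [hB]
    calc M q lam ((n:ℝ) * x - k)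
        ≤ K * (Real.exp (2 * lam) * Real.exp (-lam * |(n:ℝ) * x - k|)
            * Real.exp (-lam * |(n:ℝ) * x - k|)) := by rw [← h2]; exact h1
      _ ≤ K * Real.exp (2 * lam) * Real.exp (-lam * T)
            * Real.exp (-lam * |(n:ℝ) * x - k|) := by
          have h4 := mul_le_mul_of_nonneg_left h3 (by positivity :
            (0:ℝ) ≤ K * Real.exp (2 * lam) * Real.exp (-lam * |(n:ℝ) * x - k|))
          linarith [h4]
  have hBsub : Summable (fun k : {k : ℤ // (n : ℝ) ^ (-β) ≤ |(k : ℝ) / n - x|} ↦ B (k : ℤ)) :=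
    hBsum.subtype _
  have hMsub : Summable (fun k : {k : ℤ // (n : ℝ) ^ (-β) ≤ |(k : ℝ) / n - x|} ↦
      M q lam ((n:ℝ) * x - (k : ℤ))) :=
    Summable.of_nonneg_of_le (fun k ↦ M_nonneg q lam hq hlam _) hpt hBsub
  calc ∑' k : {k : ℤ // (n : ℝ) ^ (-β) ≤ |(k : ℝ) / n - x|}, M q lam ((n:ℝ) * x - (k : ℤ))
      ≤ ∑' k : {k : ℤ // (n : ℝ) ^ (-β) ≤ |(k : ℝ) / n - x|}, B (k : ℤ) :=
        Summable.tsum_le_tsum hpt hMsub hBsub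
    _ ≤ ∑' k : ℤ, B k := by
        apply Summable.tsum_le_tsum_of_inj (Subtype.val) Subtype.val_injective
          (fun k _ ↦ by positivity) (fun k ↦ le_refl _) hBsub hBsum
    _ = K * Real.exp (2 * lam) * Real.exp (-lam * T)
          * ∑' k : ℤ, Real.exp (-lam * |(n:ℝ) * x - k|) := by
        simp only [hB]
        rw [← tsum_mul_left]
    _ ≤ K * Real.exp (2 * lam) * Real.exp (-lam * T) * S := by
        apply mul_le_mul_of_nonneg_left htsumE (by positivity)
    _ = K * Real.exp lam * S * Real.exp (-lam * (T - 1)) := by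
        rw [show Real.exp (2 * lam) = Real.exp lam * Real.exp lam by
          rw [← Real.exp_add]; ring_nf]
        rw [show Real.exp (-lam * (T - 1)) = Real.exp lam * Real.exp (-lam * T) by
          rw [← Real.exp_add]; ring_nf]
        ring
end

section
/- If f : ℝ → ℝ is uniformly continuous and bounded, then the operators B_n(f,x) = ∑_{k∈ℤ} f(k/n) Φ(nx − k) converge to f uniformly on ℝ as n → ∞. -/
noncomputable def Phi (q lam : ℝ) (x : ℝ) : ℝ :=
  (M q lam x + M (1 / q) lam x) / 2

open Filter Topology

namespace BnAux

noncomputable def G (q lam : ℝ) (u : ℝ) : ℝ :=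
  (g q lam u + g q lam (u - 1) + g (1 / q) lam u + g (1 / q) lam (u - 1)) / 8

lemma g_eq {q : ℝ} (hq : 0 < q) (lam x : ℝ) :
    g q lam x = 1 - 2 * q / (Real.exp (2 * (lam * x)) + q) := by
  have ha : (0 : ℝ) < Real.exp (lam * x) := Real.exp_pos _
  have h2 : Real.exp (2 * (lam * x)) = Real.exp (lam * x) * Real.exp (lam * x) := by
    rw [two_mul, Real.exp_add]
  have hb : Real.exp (-lam * x) = (Real.exp (lam * x))⁻¹ := by
    rw [neg_mul, Real.exp_neg]
  have hden : (0 : ℝ) < Real.exp (lam * x) + q * (Real.exp (lam * x))⁻¹ := by positivity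
  have hden2 : (0 : ℝ) < Real.exp (2 * (lam * x)) + q := by positivity
  rw [g, hb, h2] at *
  field_simp
  ring

lemma g_mono {q : ℝ} (hq : 0 < q) (lam : ℝ) (hlam : 0 < lam) : Monotone (g q lam) := by
  intro a b hab
  rw [g_eq hq, g_eq hq]
  have hE : Real.exp (2 * (lam * a)) ≤ Real.exp (2 * (lam * b)) := by
    apply Real.exp_le_exp.2; nlinarith
  have h1 : (0 : ℝ) < Real.exp (2 * (lam * a)) + q := by positivity
  have h2 : (0 : ℝ) ≤ 2 * q := by linarith
  have := div_le_div_of_nonneg_left h2 h1 (by linarith : Real.exp (2 * (lam * a)) + q ≤ Real.exp (2 * (lam * b)) + q)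
  linarith

lemma g_le_one {q : ℝ} (hq : 0 < q) (lam x : ℝ) : g q lam x ≤ 1 := by
  rw [g_eq hq]
  have h1 : (0 : ℝ) < Real.exp (2 * (lam * x)) + q := by positivity
  have : (0 : ℝ) ≤ 2 * q / (Real.exp (2 * (lam * x)) + q) := by positivity
  linarith

lemma neg_one_le_g {q : ℝ} (hq : 0 < q) (lam x : ℝ) : -1 ≤ g q lam x := by
  rw [g_eq hq]
  have h1 : (0 : ℝ) < Real.exp (2 * (lam * x)) + q := by positivity
  have : 2 * q / (Real.exp (2 * (lam * x)) + q) ≤ 2 := by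
    rw [div_le_iff₀ h1]
    nlinarith [Real.exp_pos (2 * (lam * x))]
  linarith

lemma g_tendsto_atTop {q : ℝ} (hq : 0 < q) (lam : ℝ) (hlam : 0 < lam) :
    Tendsto (g q lam) atTop (𝓝 1) := by
  have hE : Tendsto (fun x : ℝ => Real.exp (2 * (lam * x)) + q) atTop atTop := by
    apply tendsto_atTop_add_const_right
    apply Real.tendsto_exp_atTop.comp
    have : ∀ x : ℝ, 2 * (lam * x) = (2 * lam) * x := fun x => by ring
    simp only [this]
    exact tendsto_id.const_mul_atTop (by positivity)
  have h0 : Tendsto (fun x : ℝ => 2 * q / (Real.exp (2 * (lam * x)) + q)) atTop (𝓝 0) :=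
    tendsto_const_nhds.div_atTop hE
  have h1 : Tendsto (fun x : ℝ => 1 - 2 * q / (Real.exp (2 * (lam * x)) + q)) atTop (𝓝 (1 - 0)) :=
    (tendsto_const_nhds : Tendsto (fun _ : ℝ => (1:ℝ)) atTop (𝓝 1)).sub h0
  simp only [sub_zero] at h1
  exact Tendsto.congr (fun x => (g_eq hq lam x).symm) h1

lemma g_tendsto_atBot {q : ℝ} (hq : 0 < q) (lam : ℝ) (hlam : 0 < lam) :
    Tendsto (g q lam) atBot (𝓝 (-1)) := by
  have hE : Tendsto (fun x : ℝ => Real.exp (2 * (lam * x)) + q) atBot (𝓝 (0 + q)) := by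
    apply Tendsto.add_const
    apply Real.tendsto_exp_atBot.comp
    have : ∀ x : ℝ, 2 * (lam * x) = (2 * lam) * x := fun x => by ring
    simp only [this]
    exact tendsto_id.const_mul_atBot (by positivity)
  have h0 : Tendsto (fun x : ℝ => 2 * q / (Real.exp (2 * (lam * x)) + q)) atBot (𝓝 (2 * q / (0 + q))) :=
    tendsto_const_nhds.div hE (by simp [hq.ne'])
  have h2 : 2 * q / (0 + q) = 2 := by field_simp; ring
  rw [h2] at h0
  have h1 : Tendsto (fun x : ℝ => 1 - 2 * q / (Real.exp (2 * (lam * x)) + q)) atBot (𝓝 (1 - 2)) :=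
    (tendsto_const_nhds : Tendsto (fun _ : ℝ => (1:ℝ)) atBot (𝓝 1)).sub h0
  have h3 : (1 : ℝ) - 2 = -1 := by norm_num
  rw [h3] at h1
  exact Tendsto.congr (fun x => (g_eq hq lam x).symm) h1


lemma Phi_eq (q lam : ℝ) (u : ℝ) : Phi q lam u = G q lam (u + 1) - G q lam u := by
  have h : u + 1 - 1 = u := by ring
  rw [Phi, M, M, G, G, h]
  ring

lemma G_mono {q : ℝ} (hq : 0 < q) (lam : ℝ) (hlam : 0 < lam) : Monotone (G q lam) := by
  have hq' : 0 < 1 / q := by positivity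
  intro a b hab
  have h1 := g_mono hq lam hlam hab
  have h2 := g_mono hq lam hlam (by linarith : a - 1 ≤ b - 1)
  have h3 := g_mono hq' lam hlam hab
  have h4 := g_mono hq' lam hlam (by linarith : a - 1 ≤ b - 1)
  simp only [G]
  linarith

lemma G_le {q : ℝ} (hq : 0 < q) (lam : ℝ) (u : ℝ) : G q lam u ≤ 1 / 2 := by
  have hq' : 0 < 1 / q := by positivity
  have h1 := g_le_one hq lam u
  have h2 := g_le_one hq lam (u - 1)
  have h3 := g_le_one hq' lam u
  have h4 := g_le_one hq' lam (u - 1)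
  simp only [G]; linarith

lemma G_ge {q : ℝ} (hq : 0 < q) (lam : ℝ) (u : ℝ) : -(1 / 2) ≤ G q lam u := by
  have hq' : 0 < 1 / q := by positivity
  have h1 := neg_one_le_g hq lam u
  have h2 := neg_one_le_g hq lam (u - 1)
  have h3 := neg_one_le_g hq' lam u
  have h4 := neg_one_le_g hq' lam (u - 1)
  simp only [G]; linarith

lemma G_tendsto_atTop {q : ℝ} (hq : 0 < q) (lam : ℝ) (hlam : 0 < lam) :
    Tendsto (G q lam) atTop (𝓝 (1 / 2)) := by
  have hq' : 0 < 1 / q := by positivity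
  have hshift : Tendsto (fun u : ℝ => u - 1) atTop atTop :=
    tendsto_atTop_add_const_right atTop (-1) tendsto_id
  have h1 := g_tendsto_atTop hq lam hlam
  have h2 := (g_tendsto_atTop hq lam hlam).comp hshift
  have h3 := g_tendsto_atTop hq' lam hlam
  have h4 := (g_tendsto_atTop hq' lam hlam).comp hshift
  have := (((h1.add h2).add h3).add h4).div_const (8 : ℝ)
  have he : ((1 : ℝ) + 1 + 1 + 1) / 8 = 1 / 2 := by norm_num
  rw [he] at this
  exact this.congr (fun u => by simp [G, Function.comp])

lemma G_tendsto_atBot {q : ℝ} (hq : 0 < q) (lam : ℝ) (hlam : 0 < lam) :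
    Tendsto (G q lam) atBot (𝓝 (-(1 / 2))) := by
  have hq' : 0 < 1 / q := by positivity
  have hshift : Tendsto (fun u : ℝ => u - 1) atBot atBot :=
    tendsto_atBot_add_const_right atBot (-1) tendsto_id
  have h1 := g_tendsto_atBot hq lam hlam
  have h2 := (g_tendsto_atBot hq lam hlam).comp hshift
  have h3 := g_tendsto_atBot hq' lam hlam
  have h4 := (g_tendsto_atBot hq' lam hlam).comp hshift
  have := (((h1.add h2).add h3).add h4).div_const (8 : ℝ)
  have he : ((-1 : ℝ) + -1 + -1 + -1) / 8 = -(1 / 2) := by norm_num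
  rw [he] at this
  exact this.congr (fun u => by simp [G, Function.comp])

lemma Phi_nonneg {q : ℝ} (hq : 0 < q) {lam : ℝ} (hlam : 0 < lam) (u : ℝ) :
    0 ≤ Phi q lam u := by
  rw [Phi_eq]
  have := G_mono hq lam hlam (by linarith : u ≤ u + 1)
  linarith

lemma hasSum_tail_upper {q : ℝ} (hq : 0 < q) {lam : ℝ} (hlam : 0 < lam) (y : ℝ) (m : ℤ) :
    HasSum (fun i : ℕ => Phi q lam (y - ((m : ℝ) + (i : ℝ))))
      (G q lam (y - m + 1) + 1 / 2) := by
  rw [hasSum_iff_tendsto_nat_of_nonneg (fun i => Phi_nonneg hq hlam _)]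
  have key : ∀ n : ℕ, ∑ i ∈ Finset.range n, Phi q lam (y - ((m : ℝ) + (i : ℝ)))
      = G q lam (y - m + 1) - G q lam (y - m - n + 1) := by
    intro n
    have h := Finset.sum_range_sub' (f := fun i : ℕ => G q lam (y - m - i + 1)) n
    refine Eq.trans (Finset.sum_congr rfl ?_) (h.trans ?_)
    · intro i _
      rw [Phi_eq]
      congr 1
      · push_cast; ring
      · push_cast; ring
    · norm_num
  have hcomp : Tendsto (fun n : ℕ => y - m - n + 1) atTop atBot := by
    have h1 : Tendsto (fun n : ℕ => -(n : ℝ)) atTop atBot :=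
      tendsto_neg_atTop_atBot.comp tendsto_natCast_atTop_atTop
    have h2 := tendsto_atBot_add_const_right atTop (y - m + 1) h1
    exact h2.congr (fun n => by ring)
  have hG := (G_tendsto_atBot hq lam hlam).comp hcomp
  have hfinal := (tendsto_const_nhds : Tendsto (fun _ : ℕ => G q lam (y - m + 1)) atTop
    (𝓝 (G q lam (y - m + 1)))).sub hG
  have he : G q lam (y - m + 1) - -(1 / 2) = G q lam (y - m + 1) + 1 / 2 := by ring
  rw [he] at hfinal
  exact hfinal.congr (fun n => (key n).symm)

lemma hasSum_tail_lower {q : ℝ} (hq : 0 < q) {lam : ℝ} (hlam : 0 < lam) (y : ℝ) (m : ℤ) :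
    HasSum (fun i : ℕ => Phi q lam (y - ((m : ℝ) - (i : ℝ))))
      (1 / 2 - G q lam (y - m)) := by
  rw [hasSum_iff_tendsto_nat_of_nonneg (fun i => Phi_nonneg hq hlam _)]
  have key : ∀ n : ℕ, ∑ i ∈ Finset.range n, Phi q lam (y - ((m : ℝ) - (i : ℝ)))
      = G q lam (y - m + n) - G q lam (y - m) := by
    intro n
    have h := Finset.sum_range_sub (f := fun i : ℕ => G q lam (y - m + i)) n
    refine Eq.trans (Finset.sum_congr rfl ?_) (h.trans ?_)
    · intro i _
      rw [Phi_eq]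
      congr 1
      · push_cast; ring
      · push_cast; ring
    · norm_num
  have hcomp : Tendsto (fun n : ℕ => y - m + n) atTop atTop := by
    have h2 := tendsto_atTop_add_const_left atTop (y - m) tendsto_natCast_atTop_atTop
    exact h2
  have hG := (G_tendsto_atTop hq lam hlam).comp hcomp
  have hfinal := hG.sub (tendsto_const_nhds : Tendsto (fun _ : ℕ => G q lam (y - m)) atTop
    (𝓝 (G q lam (y - m))))
  exact hfinal.congr (fun n => (key n).symm)

lemma hasSum_Phi {q : ℝ} (hq : 0 < q) {lam : ℝ} (hlam : 0 < lam) (y : ℝ) :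
    HasSum (fun k : ℤ => Phi q lam (y - (k : ℝ))) 1 := by
  have h1 : HasSum (fun n : ℕ => Phi q lam (y - (((n : ℤ)) : ℝ)))
      (G q lam (y - ((0 : ℤ) : ℝ) + 1) + 1 / 2) := by
    refine HasSum.congr_fun (hasSum_tail_upper hq hlam y 0) (fun i => ?_)
    congr 1
    push_cast
    ring
  have h2 : HasSum (fun n : ℕ => Phi q lam (y - ((-((n : ℤ) + 1) : ℤ) : ℝ)))
      (1 / 2 - G q lam (y - ((-1 : ℤ) : ℝ))) := by
    refine HasSum.congr_fun (hasSum_tail_lower hq hlam y (-1)) (fun i => ?_)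
    congr 1
    push_cast
    ring
  have h := HasSum.of_nat_of_neg_add_one (f := fun k : ℤ => Phi q lam (y - (k : ℝ))) h1 h2
  have he : (G q lam (y - ((0 : ℤ) : ℝ) + 1) + 1 / 2)
      + (1 / 2 - G q lam (y - ((-1 : ℤ) : ℝ))) = 1 := by
    have hyy : y - ((0 : ℤ) : ℝ) + 1 = y - ((-1 : ℤ) : ℝ) := by push_cast; ring
    rw [hyy]; ring
  rwa [he] at h

lemma hasSum_upper_indicator {q : ℝ} (hq : 0 < q) {lam : ℝ} (hlam : 0 < lam) (y : ℝ) (m : ℤ) :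
    HasSum (fun k : ℤ => if m ≤ k then Phi q lam (y - (k : ℝ)) else 0)
      (G q lam (y - m + 1) + 1 / 2) := by
  have hinj : Function.Injective (fun i : ℕ => m + (i : ℤ)) := by
    intro a b hab
    simp only [add_right_inj, Nat.cast_inj] at hab
    exact hab
  rw [← Function.Injective.hasSum_iff hinj ?_]
  · apply (hasSum_tail_upper hq hlam y m).congr_fun
    intro i
    simp only [Function.comp]
    rw [if_pos (by omega : m ≤ m + (i : ℤ))]
    congr 1
    push_cast
    ring
  · intro k hk
    rw [if_neg]
    intro hmk
    exact hk ⟨(k - m).toNat, by simp; omega⟩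

lemma hasSum_lower_indicator {q : ℝ} (hq : 0 < q) {lam : ℝ} (hlam : 0 < lam) (y : ℝ) (m : ℤ) :
    HasSum (fun k : ℤ => if k ≤ m then Phi q lam (y - (k : ℝ)) else 0)
      (1 / 2 - G q lam (y - m)) := by
  have hinj : Function.Injective (fun i : ℕ => m - (i : ℤ)) := by
    intro a b hab
    simp only [sub_right_inj, Nat.cast_inj] at hab
    exact hab
  rw [← Function.Injective.hasSum_iff hinj ?_]
  · apply (hasSum_tail_lower hq hlam y m).congr_fun
    intro i
    simp only [Function.comp]
    rw [if_pos (by omega : m - (i : ℤ) ≤ m)]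
    congr 1
    push_cast
    ring
  · intro k hk
    rw [if_neg]
    intro hmk
    exact hk ⟨(m - k).toNat, by simp; omega⟩

end BnAux


open BnAux

theorem B_n_uniform_convergence (q lam : ℝ) (hq : 0 < q) (hlam : 0 < lam)
    (f : ℝ → ℝ) (hf : UniformContinuous f) (hbd : ∃ Mf : ℝ, ∀ x : ℝ, |f x| ≤ Mf) :
    TendstoUniformly
      (fun (n : ℕ) (x : ℝ) => ∑' k : ℤ, f ((k : ℝ) / n) * Phi q lam (n * x - k))
      f Filter.atTop := by
  obtain ⟨Mf, hMf⟩ := hbd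
  have hMf0 : 0 ≤ Mf := le_trans (abs_nonneg _) (hMf 0)
  rw [Metric.tendstoUniformly_iff]
  intro ε hε
  obtain ⟨δ, hδ0, hδ⟩ := Metric.uniformContinuous_iff.1 hf (ε / 2) (by linarith)
  set r := δ / 2 with hrdef
  have hr0 : 0 < r := by positivity
  set ε₂ := ε / (8 * (Mf + 1)) with hε₂def
  have hMf1 : (0 : ℝ) < Mf + 1 := by linarith
  have hε₂0 : 0 < ε₂ := by positivity
  -- thresholds from the limits of G
  have hT : ∀ᶠ v in Filter.atTop, 1 / 2 - ε₂ < G q lam v :=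
    (G_tendsto_atTop hq lam hlam).eventually (eventually_gt_nhds (by linarith))
  have hB : ∀ᶠ v in Filter.atBot, G q lam v < -(1 / 2) + ε₂ :=
    (G_tendsto_atBot hq lam hlam).eventually (eventually_lt_nhds (by linarith))
  obtain ⟨A1, hA1⟩ := hT.exists_forall_of_atTop
  obtain ⟨A2, hA2⟩ := hB.exists_forall_of_atBot
  obtain ⟨N, hN⟩ := exists_nat_ge (max A1 (1 - A2) / r)
  filter_upwards [Filter.eventually_ge_atTop (N + 1)] with n hn
  intro x
  have hn1 : 1 ≤ n := le_trans (Nat.le_add_left 1 N) hn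
  have hnR : (1 : ℝ) ≤ (n : ℝ) := by exact_mod_cast hn1
  have hnN : (N : ℝ) ≤ (n : ℝ) := by exact_mod_cast le_trans (Nat.le_add_right N 1) hn
  have hnr : max A1 (1 - A2) ≤ (n : ℝ) * r := by
    rw [div_le_iff₀ hr0] at hN
    nlinarith
  have hnrA1 : A1 ≤ (n : ℝ) * r := le_trans (le_max_left _ _) hnr
  have hnrA2 : 1 - (n : ℝ) * r ≤ A2 := by
    have := le_trans (le_max_right _ _) hnr
    linarith
  set y := (n : ℝ) * x with hydef
  set mp : ℤ := ⌊y + n * r⌋ + 1 with hmpdef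
  set mm : ℤ := ⌈y - n * r⌉ - 1 with hmmdef
  have hΦnn : ∀ k : ℤ, 0 ≤ Phi q lam (y - (k : ℝ)) := fun k => Phi_nonneg hq hlam _
  have hsumPhi := hasSum_Phi hq hlam y
  have hsumPhiS := hsumPhi.summable
  -- the three bounding pieces
  have hu : HasSum (fun k : ℤ => if mp ≤ k then 2 * Mf * Phi q lam (y - (k : ℝ)) else 0)
      (2 * Mf * (G q lam (y - mp + 1) + 1 / 2)) := by
    refine ((hasSum_upper_indicator hq hlam y mp).mul_left (2 * Mf)).congr_fun (fun k => ?_)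
    by_cases h : mp ≤ k <;> simp [h]
  have hl : HasSum (fun k : ℤ => if k ≤ mm then 2 * Mf * Phi q lam (y - (k : ℝ)) else 0)
      (2 * Mf * (1 / 2 - G q lam (y - mm))) := by
    refine ((hasSum_lower_indicator hq hlam y mm).mul_left (2 * Mf)).congr_fun (fun k => ?_)
    by_cases h : k ≤ mm <;> simp [h]
  have hRHS : HasSum (fun k : ℤ => ε / 2 * Phi q lam (y - (k : ℝ))
        + (if mp ≤ k then 2 * Mf * Phi q lam (y - (k : ℝ)) else 0)
        + (if k ≤ mm then 2 * Mf * Phi q lam (y - (k : ℝ)) else 0))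
      (ε / 2 * 1 + 2 * Mf * (G q lam (y - mp + 1) + 1 / 2)
        + 2 * Mf * (1 / 2 - G q lam (y - mm))) :=
    ((hsumPhi.mul_left (ε / 2)).add hu).add hl
  -- pointwise bound
  have hbound : ∀ k : ℤ, |(f ((k : ℝ) / n) - f x) * Phi q lam (y - (k : ℝ))|
      ≤ ε / 2 * Phi q lam (y - (k : ℝ))
        + (if mp ≤ k then 2 * Mf * Phi q lam (y - (k : ℝ)) else 0)
        + (if k ≤ mm then 2 * Mf * Phi q lam (y - (k : ℝ)) else 0) := by
    intro k
    rw [abs_mul, abs_of_nonneg (hΦnn k)]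
    have hfk2 : |f ((k : ℝ) / n) - f x| ≤ 2 * Mf := by
      calc |f ((k : ℝ) / n) - f x| ≤ |f ((k : ℝ) / n)| + |f x| := abs_sub _ _
        _ ≤ Mf + Mf := add_le_add (hMf _) (hMf _)
        _ = 2 * Mf := by ring
    have hεΦ : 0 ≤ ε / 2 * Phi q lam (y - (k : ℝ)) := by
      have := hΦnn k; positivity
    by_cases hk1 : mp ≤ k
    · rw [if_pos hk1]
      have h1 : |f ((k : ℝ) / n) - f x| * Phi q lam (y - (k : ℝ))
          ≤ 2 * Mf * Phi q lam (y - (k : ℝ)) :=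
        mul_le_mul_of_nonneg_right hfk2 (hΦnn k)
      have h2 : (0 : ℝ) ≤ if k ≤ mm then 2 * Mf * Phi q lam (y - (k : ℝ)) else 0 := by
        by_cases h : k ≤ mm
        · rw [if_pos h]; exact mul_nonneg (by linarith) (hΦnn k)
        · rw [if_neg h]
      linarith
    · by_cases hk2 : k ≤ mm
      · rw [if_pos hk2, if_neg hk1]
        have h1 : |f ((k : ℝ) / n) - f x| * Phi q lam (y - (k : ℝ))
            ≤ 2 * Mf * Phi q lam (y - (k : ℝ)) :=
          mul_le_mul_of_nonneg_right hfk2 (hΦnn k)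
        linarith
      · rw [if_neg hk1, if_neg hk2]
        -- middle regime : |k - y| ≤ n r
        have hk1' : (k : ℝ) ≤ y + n * r := by
          have : k ≤ ⌊y + n * r⌋ := by omega
          exact le_trans (by exact_mod_cast this) (Int.floor_le _)
        have hk2' : y - n * r ≤ (k : ℝ) := by
          have : ⌈y - n * r⌉ ≤ k := by omega
          exact le_trans (Int.le_ceil _) (by exact_mod_cast this)
        have hdist : dist ((k : ℝ) / n) x < δ := by
          rw [Real.dist_eq]
          have hne : (0 : ℝ) < (n : ℝ) := by linarith
          have : (k : ℝ) / n - x = ((k : ℝ) - y) / n := by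
            field_simp [hydef]
            rw [hydef]
          rw [this, abs_div, abs_of_pos hne]
          have habs : |(k : ℝ) - y| ≤ (n : ℝ) * r := by
            rw [abs_le]; constructor <;> linarith
          have : |(k : ℝ) - y| / (n : ℝ) ≤ r := by
            rw [div_le_iff₀ hne]; linarith [habs]
          linarith
        have := hδ hdist
        rw [Real.dist_eq] at this
        have h1 : |f ((k : ℝ) / n) - f x| * Phi q lam (y - (k : ℝ))
            ≤ ε / 2 * Phi q lam (y - (k : ℝ)) :=
          mul_le_mul_of_nonneg_right (le_of_lt this) (hΦnn k)
        linarith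
  -- summability of the difference series
  have habs : Summable (fun k : ℤ => |(f ((k : ℝ) / n) - f x) * Phi q lam (y - (k : ℝ))|) :=
    Summable.of_nonneg_of_le (fun k => abs_nonneg _) hbound hRHS.summable
  have hsumdiff : Summable (fun k : ℤ => (f ((k : ℝ) / n) - f x) * Phi q lam (y - (k : ℝ))) :=
    habs.of_abs
  have hsum1 : Summable (fun k : ℤ => f ((k : ℝ) / n) * Phi q lam (y - (k : ℝ))) := by
    refine Summable.of_nonneg_of_le (fun k => abs_nonneg _) (fun k => ?_)
      (hsumPhiS.mul_left Mf) |>.of_abs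
    rw [abs_mul, abs_of_nonneg (hΦnn k)]
    exact mul_le_mul_of_nonneg_right (hMf _) (hΦnn k)
  have hsum2 : Summable (fun k : ℤ => f x * Phi q lam (y - (k : ℝ))) := hsumPhiS.mul_left _
  -- rewrite the difference
  have hfx : (∑' k : ℤ, f x * Phi q lam (y - (k : ℝ))) = f x := by
    rw [(hsumPhi.mul_left (f x)).tsum_eq, mul_one]
  have hdiff : (∑' k : ℤ, f ((k : ℝ) / n) * Phi q lam (y - (k : ℝ))) - f x
      = ∑' k : ℤ, (f ((k : ℝ) / n) - f x) * Phi q lam (y - (k : ℝ)) := by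
    conv_lhs => rw [← hfx]
    rw [← Summable.tsum_sub hsum1 hsum2]
    exact tsum_congr (fun k => by ring)
  -- tail estimates
  have htp : G q lam (y - mp + 1) + 1 / 2 ≤ ε₂ := by
    have harg : y - (mp : ℝ) + 1 ≤ 1 - (n : ℝ) * r := by
      have := Int.sub_one_lt_floor (y + (n : ℝ) * r)
      have hc : ((⌊y + (n : ℝ) * r⌋ : ℤ) : ℝ) = ((mp : ℝ) - 1) := by
        rw [hmpdef]; push_cast; ring
      linarith [hc ▸ this]
    have := G_mono hq lam hlam (le_trans harg (by linarith : 1 - (n : ℝ) * r ≤ A2))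
    have h2 := hA2 (1 - (n : ℝ) * r) hnrA2
    have h3 := G_mono hq lam hlam harg
    linarith
  have htm : 1 / 2 - G q lam (y - mm) ≤ ε₂ := by
    have harg : (n : ℝ) * r ≤ y - (mm : ℝ) := by
      have := Int.ceil_lt_add_one (y - (n : ℝ) * r)
      have hc : ((⌈y - (n : ℝ) * r⌉ : ℤ) : ℝ) = ((mm : ℝ) + 1) := by
        rw [hmmdef]; push_cast; ring
      linarith [hc ▸ this]
    have h2 := hA1 ((n : ℝ) * r) hnrA1
    have h3 := G_mono hq lam hlam (le_trans (by linarith : A1 ≤ (n : ℝ) * r) harg)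
    have h4 := G_mono hq lam hlam harg
    linarith
  -- final assembly
  rw [Real.dist_eq, abs_sub_comm, hdiff]
  have hnorm : |∑' k : ℤ, (f ((k : ℝ) / n) - f x) * Phi q lam (y - (k : ℝ))|
      ≤ ∑' k : ℤ, |(f ((k : ℝ) / n) - f x) * Phi q lam (y - (k : ℝ))| := by
    have h := norm_tsum_le_tsum_norm
      (f := fun k : ℤ => (f ((k : ℝ) / n) - f x) * Phi q lam (y - (k : ℝ)))
      (by simpa only [Real.norm_eq_abs] using habs)
    simpa only [Real.norm_eq_abs] using h
  calc |∑' k : ℤ, (f ((k : ℝ) / n) - f x) * Phi q lam (y - (k : ℝ))|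
      ≤ ∑' k : ℤ, |(f ((k : ℝ) / n) - f x) * Phi q lam (y - (k : ℝ))| := hnorm
    _ ≤ ε / 2 * 1 + 2 * Mf * (G q lam (y - mp + 1) + 1 / 2)
        + 2 * Mf * (1 / 2 - G q lam (y - mm)) := by
        rw [← hRHS.tsum_eq]
        exact Summable.tsum_le_tsum hbound habs hRHS.summable
    _ ≤ ε / 2 + 2 * Mf * ε₂ + 2 * Mf * ε₂ := by
        have h1 : 2 * Mf * (G q lam (y - mp + 1) + 1 / 2) ≤ 2 * Mf * ε₂ :=
          mul_le_mul_of_nonneg_left htp (by linarith)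
        have h2 : 2 * Mf * (1 / 2 - G q lam (y - mm)) ≤ 2 * Mf * ε₂ :=
          mul_le_mul_of_nonneg_left htm (by linarith)
        linarith
    _ < ε := by
        have h4 : 4 * Mf * ε₂ < ε / 2 := by
          have he : 4 * Mf * ε₂ = (Mf / (Mf + 1)) * (ε / 2) := by
            rw [hε₂def]; field_simp; ring
          rw [he]
          have hlt : Mf / (Mf + 1) < 1 := (div_lt_one hMf1).2 (by linarith)
          nlinarith
        linarith
end
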